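/- arXiv:2601.23249 — 4 statements merged into one kernel-verified Lean document; each statement's English description precedes it below -/
import Mathlib

section
/- Let B ⊆ [0,1]^d be nonempty compact convex, w ∈ ℝ^d, β = max{⟨w,x⟩ : x ∈ B ∩ {0,1}^d}, and suppose max{⟨w,x⟩ : x ∈ B} > β and for every coordinate i there exist u, v ∈ B ∩ {0,1}^d with ⟨w,u⟩ = ⟨w,v⟩ = β and u_i ≠ v_i. Then for every m ≥ 1, any branch-and-bound tree solving max{Σ_{t=1}^m ⟨w,x_t⟩ : x ∈ B^m ∩ {0,1}^{dm}} using only variable disjunctions x_{t,i} ≤ 0 or x_{t,i} ≥ 1 has at least 2^{m+1} − 1 nodes. -/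
/-- The set of 0/1 vectors in `Fin d → ℝ`. -/
def Binary (d : ℕ) : Set (Fin d → ℝ) := {x | ∀ i, x i = 0 ∨ x i = 1}

/-- A branch-and-bound tree using only variable disjunctions: each internal node
branches on a single coordinate `x t i` into the cases `x t i = 0` and `x t i = 1`. -/
inductive BBTree (m d : ℕ) : Type where
  | leaf : BBTree m d
  | branch : Fin m → Fin d → BBTree m d → BBTree m d → BBTree m d

/-- Total number of nodes of a branch-and-bound tree. -/
def BBTree.nodes {m d : ℕ} : BBTree m d → ℕ
  | .leaf => 1
  | .branch _ _ l r => 1 + l.nodes + r.nodes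

/-- `Solves obj bound T R` holds when the branch-and-bound tree `T`, applied to the
LP relaxation region `R`, fathoms every leaf: a leaf region is either infeasible or
has LP relaxation value at most `bound` (the optimal integer value / incumbent).
Branching on `x t i` intersects the region with `x t i = 0`, resp. `x t i = 1`
(equivalent to the disjunction `x t i ≤ 0` or `x t i ≥ 1` within the box `[0,1]`). -/
def Solves {m d : ℕ} (obj : (Fin m → Fin d → ℝ) → ℝ) (bound : ℝ) :
    BBTree m d → Set (Fin m → Fin d → ℝ) → Prop
  | .leaf, R => R = ∅ ∨ ∀ x ∈ R, obj x ≤ bound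
  | .branch t i l r, R =>
      Solves obj bound l (R ∩ {x | x t i = 0}) ∧
      Solves obj bound r (R ∩ {x | x t i = 1})

/-!
Keep a set `S` of "free" blocks ranging over all of `B` and pin every other block to an
optimal binary point of value `β`. Such a cylinder has LP value above `mβ` as soon as `S` is
nonempty, so a tree fathoming it must branch. Branching on a pinned block leaves the
cylinder intact in the child that agrees with the pinned value. Branching on coordinate `i`
of a free block `t` forces both children to fathom a cylinder with one free block fewer,
because for each `b ∈ {0, 1}` some optimal binary point has `i`-th coordinate `b` and block
`t` can be pinned to it. Hence a cylinder with `k` free blocks needs `2^(k+1) - 1` nodes,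
and the whole of `B^m` is the cylinder with all `m` blocks free.
-/

open Finset

variable {m d : ℕ}

lemma BBTree.one_le_nodes (T : BBTree m d) : 1 ≤ T.nodes := by
  cases T <;> simp only [BBTree.nodes] <;> omega

lemma Binary.apply_eq_or_apply_eq {u v : Fin d → ℝ} (hu : u ∈ Binary d) (hv : v ∈ Binary d)
    {i : Fin d} (huv : u i ≠ v i) {b : ℝ} (hb : b = 0 ∨ b = 1) : u i = b ∨ v i = b := by
  rcases hu i with hu | hu <;> rcases hv i with hv | hv <;> rcases hb with rfl | rfl <;>
    simp_all

def blockCylinder (B : Set (Fin d → ℝ)) (S : Finset (Fin m)) (p : Fin m → Fin d → ℝ) :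
    Set (Fin m → Fin d → ℝ) :=
  {x | (∀ t ∉ S, x t = p t) ∧ ∀ t ∈ S, x t ∈ B}

section blockCylinder

variable {B : Set (Fin d → ℝ)} {S : Finset (Fin m)} {p : Fin m → Fin d → ℝ} {t : Fin m}

lemma exists_mem_blockCylinder_lt_sum {f : (Fin d → ℝ) → ℝ} {β : ℝ}
    (hgap : ∃ x ∈ B, β < f x) (hS : S.Nonempty) (hp : ∀ t ∉ S, f (p t) = β) :
    ∃ x ∈ blockCylinder B S p, (m : ℝ) * β < ∑ t, f (x t) := by
  obtain ⟨x₀, hx₀, hβ⟩ := hgap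
  obtain ⟨s, hs⟩ := hS
  classical
  refine ⟨fun t => if t ∈ S then x₀ else p t, ⟨fun t ht => if_neg ht, fun t ht => ?_⟩, ?_⟩
  · simpa [ht] using hx₀
  calc (m : ℝ) * β = ∑ _t : Fin m, β := by simp
    _ < ∑ t, f (if t ∈ S then x₀ else p t) := by
      refine sum_lt_sum (fun t _ => ?_) ⟨s, mem_univ s, by simpa [hs] using hβ⟩
      by_cases ht : t ∈ S
      · simpa [ht] using hβ.le
      · simp [ht, hp t ht]

lemma blockCylinder_subset_setOf_apply_eq (ht : t ∉ S) (i : Fin d) :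
    blockCylinder B S p ⊆ {x | x t i = p t i} :=
  fun _ hx => congrFun (hx.1 t ht) i

lemma blockCylinder_erase_update_subset (ht : t ∈ S) {u : Fin d → ℝ} (hu : u ∈ B) :
    blockCylinder B (S.erase t) (Function.update p t u) ⊆ blockCylinder B S p := by
  rintro x ⟨hpin, hfree⟩
  have hxt : x t = u := by simpa using hpin t (by simp)
  refine ⟨fun s hs => ?_, fun s hs => ?_⟩
  · have hst : s ≠ t := fun h => hs (h ▸ ht)
    simpa [hst] using hpin s (fun h => hs (mem_of_mem_erase h))
  · by_cases hst : s = t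
    · exact hst ▸ hxt ▸ hu
    · exact hfree s (mem_erase.2 ⟨hst, hs⟩)

lemma blockCylinder_erase_update_subset_setOf_apply_eq (u : Fin d → ℝ) (i : Fin d) :
    blockCylinder B (S.erase t) (Function.update p t u) ⊆ {x | x t i = u i} := by
  rintro x ⟨hpin, -⟩
  simpa using congrFun (hpin t (by simp)) i

lemma forall_notMem_erase_update {P : (Fin d → ℝ) → Prop} (hp : ∀ t ∉ S, P (p t))
    {u : Fin d → ℝ} (hu : P u) : ∀ s ∉ S.erase t, P (Function.update p t u s) := by
  intro s hs
  by_cases hst : s = t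
  · simpa [hst] using hu
  · simpa [hst] using hp s (fun h => hs (mem_erase.2 ⟨hst, h⟩))

end blockCylinder

theorem Solves.two_pow_card_succ_le_nodes_add_one {f : (Fin d → ℝ) → ℝ} {B : Set (Fin d → ℝ)}
    {β : ℝ} (hgap : ∃ x ∈ B, β < f x)
    (hanchor : ∀ i (b : ℝ), (b = 0 ∨ b = 1) → ∃ u ∈ B ∩ Binary d, f u = β ∧ u i = b)
    (T : BBTree m d) {S : Finset (Fin m)} {p : Fin m → Fin d → ℝ}
    {R : Set (Fin m → Fin d → ℝ)} (hp : ∀ t ∉ S, p t ∈ Binary d ∧ f (p t) = β)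
    (hR : blockCylinder B S p ⊆ R) (hT : Solves (fun x => ∑ t, f (x t)) (m * β) T R) :
    2 ^ (S.card + 1) ≤ T.nodes + 1 := by
  induction T generalizing S p R with
  | leaf =>
    rcases S.eq_empty_or_nonempty with rfl | hS
    · simp [BBTree.nodes]
    obtain ⟨x, hx, hlt⟩ := exists_mem_blockCylinder_lt_sum hgap hS (fun t ht => (hp t ht).2)
    rcases hT with hempty | hle
    · exact absurd (hR hx) (hempty ▸ Set.notMem_empty x)
    · exact absurd (hle x (hR hx)) (not_le.2 hlt)
  | branch t i l r ihl ihr =>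
    obtain ⟨hl, hr⟩ := hT
    simp only [BBTree.nodes]
    by_cases ht : t ∈ S
    · have child : ∀ (b : ℝ), (b = 0 ∨ b = 1) → ∃ p' : Fin m → Fin d → ℝ,
          (∀ s ∉ S.erase t, p' s ∈ Binary d ∧ f (p' s) = β) ∧
          blockCylinder B (S.erase t) p' ⊆ R ∩ {x | x t i = b} := by
        intro b hb
        obtain ⟨u, hu, hfu, hui⟩ := hanchor i b hb
        refine ⟨Function.update p t u,
          forall_notMem_erase_update (P := fun y => y ∈ Binary d ∧ f y = β) hp
            ⟨hu.2, hfu⟩,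
          Set.subset_inter ((blockCylinder_erase_update_subset ht hu.1).trans hR) ?_⟩
        exact hui ▸ blockCylinder_erase_update_subset_setOf_apply_eq u i
      obtain ⟨p₀, hp₀, hR₀⟩ := child 0 (.inl rfl)
      obtain ⟨p₁, hp₁, hR₁⟩ := child 1 (.inr rfl)
      have := ihl hp₀ hR₀ hl
      have := ihr hp₁ hR₁ hr
      rw [← card_erase_add_one ht, pow_succ]
      omega
    · have hR' : blockCylinder B S p ⊆ R ∩ {x | x t i = p t i} :=
        Set.subset_inter hR (blockCylinder_subset_setOf_apply_eq ht i)
      rcases (hp t ht).1 i with h | h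
      · have := ihl hp (h ▸ hR') hl
        have := r.one_le_nodes
        omega
      · have := ihr hp (h ▸ hR') hr
        have := l.one_le_nodes
        omega

theorem stmt_10_general (d : ℕ) (B : Set (Fin d → ℝ)) (w : Fin d → ℝ)
    (β : ℝ)
    (hgap : ∃ x ∈ B, β < ∑ i, w i * x i)
    (hpair : ∀ i : Fin d, ∃ u ∈ B ∩ Binary d, ∃ v ∈ B ∩ Binary d,
      (∑ j, w j * u j) = β ∧ (∑ j, w j * v j) = β ∧ u i ≠ v i)
    (m : ℕ)
    (T : BBTree m d)
    (hT : Solves (fun x => ∑ t, ∑ i, w i * x t i) ((m : ℝ) * β) T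
      {x | ∀ t, x t ∈ B}) :
    2 ^ (m + 1) - 1 ≤ T.nodes := by
  have hanchor : ∀ i (b : ℝ), (b = 0 ∨ b = 1) →
      ∃ u ∈ B ∩ Binary d, (∑ j, w j * u j) = β ∧ u i = b := by
    intro i b hb
    obtain ⟨u, hu, v, hv, hwu, hwv, huv⟩ := hpair i
    rcases Binary.apply_eq_or_apply_eq hu.2 hv.2 huv hb with h | h
    exacts [⟨u, hu, hwu, h⟩, ⟨v, hv, hwv, h⟩]
  have := Solves.two_pow_card_succ_le_nodes_add_one (f := fun y => ∑ i, w i * y i) hgap hanchor T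
    (S := univ) (p := 0) (by simp) (fun x hx t => hx.2 t (mem_univ t)) hT
  rw [card_univ, Fintype.card_fin] at this
  omega

theorem stmt_10 (d : ℕ) (B : Set (Fin d → ℝ)) (w : Fin d → ℝ)
    (hB : B ⊆ {x | ∀ i, x i ∈ Set.Icc (0:ℝ) 1})
    (hne : B.Nonempty) (hcomp : IsCompact B) (hconv : Convex ℝ B)
    (β : ℝ)
    (hβ : IsGreatest ((fun x => ∑ i, w i * x i) '' (B ∩ Binary d)) β)
    (hgap : ∃ x ∈ B, β < ∑ i, w i * x i)
    (hpair : ∀ i : Fin d, ∃ u ∈ B ∩ Binary d, ∃ v ∈ B ∩ Binary d,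
      (∑ j, w j * u j) = β ∧ (∑ j, w j * v j) = β ∧ u i ≠ v i)
    (m : ℕ) (hm : 1 ≤ m)
    (T : BBTree m d)
    (hT : Solves (fun x => ∑ t, ∑ i, w i * x t i) ((m : ℝ) * β) T
      {x | ∀ t, x t ∈ B}) :
    2 ^ (m + 1) - 1 ≤ T.nodes :=
  stmt_10_general d B w β hgap hpair m T hT
end

section
/- Consider a single block with variables (b, p, y₁, y₂, y₃) ∈ [0,1]⁵, objective 24b + Mp + 4y₁ + 8y₂ + 8y₃ with M ≥ 15, and constraints 2b + p ≤ 2, b + y₁ + y₂ ≤ 2, b + y₁ + y₃ ≤ 2, b + y₂ + y₃ ≤ 2. The LP maximum equals M + 27, attained uniquely at b = 1/2, p = 1, y₁ = y₂ = y₃ = 3/4. -/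
/-- Feasibility of a single block (b, p, y₁, y₂, y₃) ∈ [0,1]⁵. -/
def BlockFeas (b p y1 y2 y3 : ℝ) : Prop :=
  b ∈ Set.Icc (0:ℝ) 1 ∧ p ∈ Set.Icc (0:ℝ) 1 ∧ y1 ∈ Set.Icc (0:ℝ) 1 ∧
  y2 ∈ Set.Icc (0:ℝ) 1 ∧ y3 ∈ Set.Icc (0:ℝ) 1 ∧
  2 * b + p ≤ 2 ∧ b + y1 + y2 ≤ 2 ∧ b + y1 + y3 ≤ 2 ∧ b + y2 + y3 ≤ 2

/-- The block objective. -/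
def BlockObj (M b p y1 y2 y3 : ℝ) : ℝ := 24 * b + M * p + 4 * y1 + 8 * y2 + 8 * y3

/-!
LP duality with an explicit dual solution: the multipliers `7, 2, 2, 6` on the four coupling
constraints and `M - 7` on `p ≤ 1` price out the objective exactly, so the objective equals
`M + 27` minus a nonnegative combination of slacks. Equality forces every
slack with a positive multiplier to vanish; for `M > 7` this means `p = 1` and the four coupling
constraints are tight, a linear system whose only solution is `b = 1/2`, `y₁ = y₂ = y₃ = 3/4`.
-/

def blockSlack (M b p y1 y2 y3 : ℝ) : ℝ :=
  7 * (2 - (2 * b + p)) + 2 * (2 - (b + y1 + y2)) + 2 * (2 - (b + y1 + y3)) +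
    6 * (2 - (b + y2 + y3)) + (M - 7) * (1 - p)

theorem blockObj_add_blockSlack (M b p y1 y2 y3 : ℝ) :
    BlockObj M b p y1 y2 y3 + blockSlack M b p y1 y2 y3 = M + 27 := by
  unfold BlockObj blockSlack
  ring

namespace BlockFeas

variable {M b p y1 y2 y3 : ℝ}

theorem blockSlack_nonneg (h : BlockFeas b p y1 y2 y3) (hM : 7 ≤ M) :
    0 ≤ blockSlack M b p y1 y2 y3 := by
  obtain ⟨-, ⟨-, hp⟩, -, -, -, c₀, c₁, c₂, c₃⟩ := h
  have : 0 ≤ (M - 7) * (1 - p) := mul_nonneg (by linarith) (by linarith)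
  unfold blockSlack
  linarith

theorem eq_of_blockSlack_eq_zero (h : BlockFeas b p y1 y2 y3) (hM : 7 < M)
    (h₀ : blockSlack M b p y1 y2 y3 = 0) :
    b = 1 / 2 ∧ p = 1 ∧ y1 = 3 / 4 ∧ y2 = 3 / 4 ∧ y3 = 3 / 4 := by
  obtain ⟨-, ⟨-, hp⟩, -, -, -, c₀, c₁, c₂, c₃⟩ := h
  unfold blockSlack at h₀
  have hp_slack : (M - 7) * (1 - p) = 0 := by
    have : 0 ≤ (M - 7) * (1 - p) := mul_nonneg (by linarith) (by linarith)
    linarith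
  have hp1 : p = 1 := by
    rcases mul_eq_zero.1 hp_slack with h | h <;> linarith
  subst hp1
  refine ⟨?_, rfl, ?_, ?_, ?_⟩ <;> linarith

end BlockFeas

theorem blockFeas_optimum : BlockFeas (1 / 2) 1 (3 / 4) (3 / 4) (3 / 4) := by
  norm_num [BlockFeas]

theorem blockObj_optimum (M : ℝ) : BlockObj M (1 / 2) 1 (3 / 4) (3 / 4) (3 / 4) = M + 27 := by
  unfold BlockObj
  ring

theorem stmt_14 (M : ℝ) (hM : 15 ≤ M) :
    IsGreatest {v : ℝ | ∃ b p y1 y2 y3, BlockFeas b p y1 y2 y3 ∧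
      v = BlockObj M b p y1 y2 y3} (M + 27) ∧
    (∀ b p y1 y2 y3, BlockFeas b p y1 y2 y3 →
      BlockObj M b p y1 y2 y3 = M + 27 →
      b = 1 / 2 ∧ p = 1 ∧ y1 = 3 / 4 ∧ y2 = 3 / 4 ∧ y3 = 3 / 4) := by
  refine ⟨⟨⟨_, _, _, _, _, blockFeas_optimum, (blockObj_optimum M).symm⟩, ?_⟩, ?_⟩
  · rintro v ⟨b, p, y1, y2, y3, h, rfl⟩
    linarith [blockObj_add_blockSlack M b p y1 y2 y3, h.blockSlack_nonneg (by linarith)]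
  · intro b p y1 y2 y3 h hobj
    have h₀ : blockSlack M b p y1 y2 y3 = 0 := by
      linarith [blockObj_add_blockSlack M b p y1 y2 y3]
    exact h.eq_of_blockSlack_eq_zero (by linarith) h₀
end

section
/- In the single block with objective 24b + Mp + 4y₁ + 8y₂ + 8y₃ (M ≥ 15) and constraints 2b + p ≤ 2, b + y₁ + y₂ ≤ 2, b + y₁ + y₃ ≤ 2, b + y₂ + y₃ ≤ 2 over [0,1]⁵: fixing b = 0 gives LP maximum M + 20, and fixing b = 1 gives LP maximum 34. -/
/-!
With `b = 0` the coupling constraints are slack, so every variable can be set to `1`.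
With `b = 1` the constraint `2b + p ≤ 2` forces `p = 0`, and the pairwise constraints
`yᵢ + yⱼ ≤ 1` bound `4y₁ + 8y₂ + 8y₃` by `10`, attained at `y = (1/2, 1/2, 1/2)`.
-/

theorem isGreatest_blockObj_of_b_eq_zero {M : ℝ} (hM : 0 ≤ M) :
    IsGreatest {v : ℝ | ∃ p y1 y2 y3, BlockFeas 0 p y1 y2 y3 ∧
      v = BlockObj M 0 p y1 y2 y3} (M + 20) := by
  refine ⟨⟨1, 1, 1, 1, by norm_num [BlockFeas], by norm_num [BlockObj]; ring⟩, ?_⟩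
  rintro v ⟨p, y1, y2, y3, ⟨-, ⟨-, hp⟩, ⟨-, hy1⟩, ⟨-, hy2⟩, ⟨-, hy3⟩, -⟩, rfl⟩
  have hMp : M * p ≤ M := mul_le_of_le_one_right hM hp
  simp only [BlockObj]
  linarith

theorem isGreatest_blockObj_of_b_eq_one (M : ℝ) :
    IsGreatest {v : ℝ | ∃ p y1 y2 y3, BlockFeas 1 p y1 y2 y3 ∧
      v = BlockObj M 1 p y1 y2 y3} 34 := by
  refine ⟨⟨0, 1/2, 1/2, 1/2, by norm_num [BlockFeas], by norm_num [BlockObj]⟩, ?_⟩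
  rintro v ⟨p, y1, y2, y3, ⟨-, ⟨hp0, hp⟩, -, -, -, hbp, h12, h13, h23⟩, rfl⟩
  obtain rfl : p = 0 := by linarith
  -- dual certificate: `4y₁ + 8y₂ + 8y₃ = 2(y₁ + y₂) + 2(y₁ + y₃) + 6(y₂ + y₃)`
  simp only [BlockObj]
  linarith

theorem stmt_15 (M : ℝ) (hM : 15 ≤ M) :
    IsGreatest {v : ℝ | ∃ p y1 y2 y3, BlockFeas 0 p y1 y2 y3 ∧
      v = BlockObj M 0 p y1 y2 y3} (M + 20) ∧
    IsGreatest {v : ℝ | ∃ p y1 y2 y3, BlockFeas 1 p y1 y2 y3 ∧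
      v = BlockObj M 1 p y1 y2 y3} 34 :=
  ⟨isGreatest_blockObj_of_b_eq_zero (by linarith), isGreatest_blockObj_of_b_eq_one M⟩
end

section
/- In the single block with objective 24b + Mp + 4y₁ + 8y₂ + 8y₃ (M ≥ 15) and constraints 2b + p ≤ 2, b + y₁ + y₂ ≤ 2, b + y₁ + y₃ ≤ 2, b + y₂ + y₃ ≤ 2 over [0,1]⁵: fixing y₁ = 0 gives LP maximum M + 24, and fixing y₁ = 1 also gives LP maximum M + 24. -/
section

variable {M b p y2 y3 : ℝ}

-- Dual certificate: `M + 24 - obj = 8 (2 - b - y₂ - y₃) + 8 (2 - 2b - p) + (M - 8) (1 - p)`.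
theorem blockObj_le_of_blockFeas_zero (hM : 8 ≤ M) (h : BlockFeas b p 0 y2 y3) :
    BlockObj M b p 0 y2 y3 ≤ M + 24 := by
  obtain ⟨-, ⟨-, hp1⟩, -, -, -, hbp, -, -, hby⟩ := h
  have hslack : 0 ≤ (M - 8) * (1 - p) := mul_nonneg (by linarith) (by linarith)
  unfold BlockObj
  linarith

-- Dual certificate: `M + 24 - obj = 8 (1 - b - y₂) + 8 (1 - b - y₃) + 4 (2 - 2b - p) + (M - 4) (1 - p)`.
theorem blockObj_le_of_blockFeas_one (hM : 4 ≤ M) (h : BlockFeas b p 1 y2 y3) :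
    BlockObj M b p 1 y2 y3 ≤ M + 24 := by
  obtain ⟨-, ⟨-, hp1⟩, -, -, -, hbp, hby2, hby3, -⟩ := h
  have hslack : 0 ≤ (M - 4) * (1 - p) := mul_nonneg (by linarith) (by linarith)
  unfold BlockObj
  linarith

end

theorem stmt_16 (M : ℝ) (hM : 15 ≤ M) :
    IsGreatest {v : ℝ | ∃ b p y2 y3, BlockFeas b p 0 y2 y3 ∧
      v = BlockObj M b p 0 y2 y3} (M + 24) ∧
    IsGreatest {v : ℝ | ∃ b p y2 y3, BlockFeas b p 1 y2 y3 ∧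
      v = BlockObj M b p 1 y2 y3} (M + 24) := by
  refine ⟨⟨?_, ?_⟩, ⟨?_, ?_⟩⟩
  · exact ⟨1/2, 1, 1, 1/2, by norm_num [BlockFeas], by norm_num [BlockObj]; ring⟩
  · rintro v ⟨b, p, y2, y3, h, rfl⟩
    exact blockObj_le_of_blockFeas_zero (by linarith) h
  · exact ⟨1/2, 1, 1/2, 1/2, by norm_num [BlockFeas], by norm_num [BlockObj]; ring⟩
  · rintro v ⟨b, p, y2, y3, h, rfl⟩
    exact blockObj_le_of_blockFeas_one (by linarith) h
end
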